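/- Let l1, l2, l3 ∈ A_L be distinct low-level actions and h ∈ A_H. The process P = τ.(τ.l1.0 + τ.l2.0) + (h.l1.0 + h.l2.0) + l3.0 satisfies P ∈ BSNNI and P ∈ SBSNNI, but P ∉ BrSNNI and P ∉ SBrSNNI. -/

import Mathlib

namespace SecurityNI

/-- Process terms: `0`, action prefix (`none` = τ, `some a` = observable action),
choice, CSP-style parallel composition with synchronization set, restriction,
hiding, and constants (whose defining equations are given by an environment). -/
inductive Proc (A : Type) (C : Type) : Type where
  | nil : Proc A C
  | pre : Option A → Proc A C → Proc A C
  | choice : Proc A C → Proc A C → Proc A C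
  | par : Set A → Proc A C → Proc A C → Proc A C
  | restrict : Proc A C → Set A → Proc A C
  | hide : Proc A C → Set A → Proc A C
  | const : C → Proc A C

variable {A C : Type}

/-- A process term is guarded when every constant occurrence is in the scope
of an action prefix operator. -/
def Guarded : Proc A C → Prop
  | .nil => True
  | .pre _ _ => True
  | .choice p q => Guarded p ∧ Guarded q
  | .par _ p q => Guarded p ∧ Guarded q
  | .restrict p _ => Guarded p
  | .hide p _ => Guarded p
  | .const _ => False

/-- Operational semantics, parameterized by the defining equations `env` of
the constants.  Labels are `Option A`, with `none` playing the role of τ. -/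
inductive Trans (env : C → Proc A C) : Proc A C → Option A → Proc A C → Prop where
  | pre (a : Option A) (p : Proc A C) : Trans env (.pre a p) a p
  | choiceL {p q a p'} (h : Trans env p a p') : Trans env (.choice p q) a p'
  | choiceR {p q a q'} (h : Trans env q a q') : Trans env (.choice p q) a q'
  | parL {L p q a p'} (h : Trans env p a p') (hn : ∀ x, a = some x → x ∉ L) :
      Trans env (.par L p q) a (.par L p' q)
  | parR {L p q a q'} (h : Trans env q a q') (hn : ∀ x, a = some x → x ∉ L) :
      Trans env (.par L p q) a (.par L p q')
  | sync {L p q x p' q'} (h1 : Trans env p (some x) p') (h2 : Trans env q (some x) q')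
      (hx : x ∈ L) : Trans env (.par L p q) (some x) (.par L p' q')
  | res {p a p' L} (h : Trans env p a p') (hn : ∀ x, a = some x → x ∉ L) :
      Trans env (.restrict p L) a (.restrict p' L)
  | hideIn {p x p' L} (h : Trans env p (some x) p') (hx : x ∈ L) :
      Trans env (.hide p L) none (.hide p' L)
  | hideOut {p a p' L} (h : Trans env p a p') (hn : ∀ x, a = some x → x ∉ L) :
      Trans env (.hide p L) a (.hide p' L)
  | const {c a p'} (h : Trans env (env c) a p') : Trans env (.const c) a p'

section LTS

variable {S : Type} (tr : S → Option A → S → Prop)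

/-- Finitely many (possibly zero) τ-transitions. -/
def TauStar : S → S → Prop :=
  Relation.ReflTransGen (fun s s' => tr s none s')

/-- `B` is a branching bisimulation. -/
def IsBranchingBisim (B : S → S → Prop) : Prop :=
  Symmetric B ∧
    ∀ s1 s2, B s1 s2 → ∀ a s1', tr s1 a s1' →
      (a = none ∧ B s1' s2) ∨
      (∃ s2b s2', TauStar tr s2 s2b ∧ tr s2b a s2' ∧ B s1 s2b ∧ B s1' s2')

/-- Branching bisimilarity `≈_b`. -/
def BrBisim (s1 s2 : S) : Prop :=
  ∃ B, IsBranchingBisim tr B ∧ B s1 s2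

/-- `B` is a weak bisimulation. -/
def IsWeakBisim (B : S → S → Prop) : Prop :=
  Symmetric B ∧
    ∀ s1 s2, B s1 s2 →
      (∀ s1', tr s1 none s1' → ∃ s2', TauStar tr s2 s2' ∧ B s1' s2') ∧
      (∀ x s1', tr s1 (some x) s1' →
        ∃ t t' s2', TauStar tr s2 t ∧ tr t (some x) t' ∧ TauStar tr t' s2' ∧ B s1' s2')

/-- Weak bisimilarity `≈`. -/
def WeakBisim (s1 s2 : S) : Prop :=
  ∃ B, IsWeakBisim tr B ∧ B s1 s2

/-- Reachability via finitely many transitions. -/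
def Reach : S → S → Prop :=
  Relation.ReflTransGen (fun s s' => ∃ a, tr s a s')

end LTS

section Security

variable (env : C → Proc A C) (AH : Set A)

/-- `P ∈ BrSNNI` iff `P∖A_H ≈_b P/A_H`. -/
def BrSNNI (p : Proc A C) : Prop :=
  BrBisim (Trans env) (.restrict p AH) (.hide p AH)

/-- All processes reachable from `q` perform only actions in `AH`. -/
def HighOnly (q : Proc A C) : Prop :=
  ∀ q', Reach (Trans env) q q' → ∀ a q'', Trans env q' a q'' → ∃ h ∈ AH, a = some h

/-- `P ∈ BrNDC` iff `P∖A_H ≈_b ((P ∥_L Q)/L)∖A_H` for every high-level `Q`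
and every `L ⊆ A_H`. -/
def BrNDC (p : Proc A C) : Prop :=
  ∀ q, HighOnly env AH q → ∀ L, L ⊆ AH →
    BrBisim (Trans env) (.restrict p AH) (.restrict (.hide (.par L p q) L) AH)

/-- `P ∈ SBrSNNI` iff every reachable process is BrSNNI. -/
def SBrSNNI (p : Proc A C) : Prop :=
  ∀ p', Reach (Trans env) p p' → BrSNNI env AH p'

/-- `P ∈ P_BrNDC` iff every reachable process is BrNDC. -/
def PBrNDC (p : Proc A C) : Prop :=
  ∀ p', Reach (Trans env) p p' → BrNDC env AH p'

/-- `P ∈ SBrNDC` iff for every reachable `P'` and every high transition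
`P' --h→ P''`, `P'∖A_H ≈_b P''∖A_H`. -/
def SBrNDC (p : Proc A C) : Prop :=
  ∀ p' p'', Reach (Trans env) p p' → ∀ h ∈ AH, Trans env p' (some h) p'' →
    BrBisim (Trans env) (.restrict p' AH) (.restrict p'' AH)

/-- `P ∈ BSNNI` iff `P∖A_H ≈ P/A_H`. -/
def BSNNI (p : Proc A C) : Prop :=
  WeakBisim (Trans env) (.restrict p AH) (.hide p AH)

/-- `P ∈ BNDC` iff `P∖A_H ≈ ((P ∥_L Q)/L)∖A_H` for every high-level `Q`
and every `L ⊆ A_H`. -/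
def BNDC (p : Proc A C) : Prop :=
  ∀ q, HighOnly env AH q → ∀ L, L ⊆ AH →
    WeakBisim (Trans env) (.restrict p AH) (.restrict (.hide (.par L p q) L) AH)

/-- `P ∈ SBSNNI` iff every reachable process is BSNNI. -/
def SBSNNI (p : Proc A C) : Prop :=
  ∀ p', Reach (Trans env) p p' → BSNNI env AH p'

/-- `P ∈ P_BNDC` iff every reachable process is BNDC. -/
def PBNDC (p : Proc A C) : Prop :=
  ∀ p', Reach (Trans env) p p' → BNDC env AH p'

/-- `P ∈ SBNDC` iff for every reachable `P'` and every high transition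
`P' --h→ P''`, `P'∖A_H ≈ P''∖A_H`. -/
def SBNDC (p : Proc A C) : Prop :=
  ∀ p' p'', Reach (Trans env) p p' → ∀ h ∈ AH, Trans env p' (some h) p'' →
    WeakBisim (Trans env) (.restrict p' AH) (.restrict p'' AH)

/-- No high-level actions occur in `p`: no process reachable from `p`
can perform a high-level action. -/
def NoHigh (p : Proc A C) : Prop :=
  ∀ p', Reach (Trans env) p p' → ∀ h ∈ AH, ∀ p'', ¬ Trans env p' (some h) p''

end Security

/-! Hiding the high action `h` turns the branch `h.l1.0 + h.l2.0` of `P` into `τ.l1.0 + τ.l2.0`, and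
`P∖A_H` reaches the same states `l1.0`, `l2.0` through its τ-branch. In general, if every high step
of every reachable state can be replaced by τ-steps with the same target, then `p∖A_H ≈ p/A_H` for
all reachable `p`, which gives BSNNI and SBSNNI.

Branching bisimilarity preserves which visible actions are weakly enabled, and it also forces the
intermediate state of a matching move to be related. The step `P/A_H --τ→ l1.0/A_H` must be answered
by `P∖A_H` either by idling, but `P∖A_H` can do `l3`, or by a τ-step out of a state related to `P/A_H`.
That state cannot lie below `(τ.l1.0 + τ.l2.0)∖A_H`, which cannot weakly do `l3`, so it is `P∖A_H` and the
step leads to `(τ.l1.0 + τ.l2.0)∖A_H`, which can still weakly do `l2` while `l1.0/A_H` cannot. -/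

open Relation

section WeakEnabled

variable {S : Type} {tr : S → Option A → S → Prop}

def WeakEnabled (tr : S → Option A → S → Prop) (s : S) (x : A) : Prop :=
  ∃ t t', TauStar tr s t ∧ tr t (some x) t'

def Performs (tr : S → Option A → S → Prop) (s : S) (x : A) : Prop :=
  ∃ t t', Reach tr s t ∧ tr t (some x) t'

theorem WeakEnabled.of_tauStar {s u : S} {x : A} (hsu : TauStar tr s u)
    (hu : WeakEnabled tr u x) : WeakEnabled tr s x :=
  let ⟨t, t', hut, ht⟩ := hu
  ⟨t, t', hsu.trans hut, ht⟩

theorem WeakEnabled.performs {s : S} {x : A} (h : WeakEnabled tr s x) : Performs tr s x :=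
  let ⟨t, t', hst, ht⟩ := h
  ⟨t, t', ReflTransGen.mono (fun _ _ hstep => ⟨none, hstep⟩) _ _ hst, ht⟩

theorem Performs.cases {s : S} {x : A} (h : Performs tr s x) :
    (∃ t', tr s (some x) t') ∨ ∃ a s', tr s a s' ∧ Performs tr s' x := by
  obtain ⟨t, t', hst, ht⟩ := h
  rcases hst.cases_head with rfl | ⟨s', ⟨a, hs⟩, hs't⟩
  · exact .inl ⟨t', ht⟩
  · exact .inr ⟨a, s', hs, t, t', hs't, ht⟩

theorem IsBranchingBisim.weakEnabled {B : S → S → Prop} (hB : IsBranchingBisim tr B)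
    {s1 s2 : S} {x : A} (h12 : B s1 s2) (h : WeakEnabled tr s1 x) : WeakEnabled tr s2 x := by
  obtain ⟨t, t', hst, ht⟩ := h
  induction hst using ReflTransGen.head_induction_on generalizing s2 with
  | refl =>
    rcases hB.2 _ _ h12 _ _ ht with ⟨hnone, -⟩ | ⟨u, u', hsu, hu, -, -⟩
    · cases hnone
    · exact ⟨u, u', hsu, hu⟩
  | head hstep _ ih =>
    rcases hB.2 _ _ h12 _ _ hstep with ⟨-, h'⟩ | ⟨u, u', hsu, hu, -, h'⟩
    · exact ih h'
    · exact (ih h').of_tauStar (hsu.tail hu)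

end WeakEnabled

section Operators

variable {env : C → Proc A C} {L : Set A}

theorem none_notMem : ∀ x : A, (none : Option A) = some x → x ∉ L := nofun

theorem some_notMem {a : A} (ha : a ∉ L) : ∀ x : A, some a = some x → x ∉ L := by
  rintro _ ⟨⟩
  exact ha

theorem trans_nil {b : Option A} {s : Proc A C} : ¬ Trans env .nil b s := nofun

theorem trans_restrict {p s : Proc A C} {b : Option A} (t : Trans env (.restrict p L) b s) :
    ∃ p', Trans env p b p' ∧ s = .restrict p' L ∧ ∀ x, b = some x → x ∉ L := by
  cases t with
  | res t hn => exact ⟨_, t, rfl, hn⟩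

theorem trans_hide {p s : Proc A C} {b : Option A} (t : Trans env (.hide p L) b s) :
    (∃ x p', Trans env p (some x) p' ∧ x ∈ L ∧ b = none ∧ s = .hide p' L) ∨
    (∃ p', Trans env p b p' ∧ (∀ x, b = some x → x ∉ L) ∧ s = .hide p' L) := by
  cases t with
  | hideIn t hx => exact .inl ⟨_, _, t, hx, rfl, rfl⟩
  | hideOut t hn => exact .inr ⟨_, t, hn, rfl⟩

theorem tauStar_restrict {p q : Proc A C} (h : TauStar (Trans env) p q) :
    TauStar (Trans env) (.restrict p L) (.restrict q L) :=
  ReflTransGen.lift (Proc.restrict · L) (fun _ _ t => .res t none_notMem) _ _ h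

theorem reach_restrict {p s : Proc A C} (h : Reach (Trans env) (.restrict p L) s) :
    ∃ q, s = .restrict q L ∧ Reach (Trans env) p q := by
  induction h with
  | refl => exact ⟨p, rfl, .refl⟩
  | tail _ hstep ih =>
    obtain ⟨q, rfl, hpq⟩ := ih
    obtain ⟨a, t⟩ := hstep
    obtain ⟨q', hq, rfl, -⟩ := trans_restrict t
    exact ⟨q', rfl, hpq.tail ⟨a, hq⟩⟩

theorem reach_hide {p s : Proc A C} (h : Reach (Trans env) (.hide p L) s) :
    ∃ q, s = .hide q L ∧ Reach (Trans env) p q := by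
  induction h with
  | refl => exact ⟨p, rfl, .refl⟩
  | tail _ hstep ih =>
    obtain ⟨q, rfl, hpq⟩ := ih
    obtain ⟨a, t⟩ := hstep
    rcases trans_hide t with ⟨x, q', hq, -, -, rfl⟩ | ⟨q', hq, -, rfl⟩
    · exact ⟨q', rfl, hpq.tail ⟨some x, hq⟩⟩
    · exact ⟨q', rfl, hpq.tail ⟨a, hq⟩⟩

theorem performs_restrict {p : Proc A C} {x : A}
    (h : Performs (Trans env) (.restrict p L) x) : Performs (Trans env) p x := by
  obtain ⟨t, t', hpt, ht⟩ := h
  obtain ⟨q, rfl, hpq⟩ := reach_restrict hpt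
  obtain ⟨q', hq, -, -⟩ := trans_restrict ht
  exact ⟨q, q', hpq, hq⟩

theorem performs_hide {p : Proc A C} {x : A}
    (h : Performs (Trans env) (.hide p L) x) : Performs (Trans env) p x := by
  obtain ⟨t, t', hpt, ht⟩ := h
  obtain ⟨q, rfl, hpq⟩ := reach_hide hpt
  rcases trans_hide ht with ⟨-, -, -, -, hb, -⟩ | ⟨q', hq, -, -⟩
  · cases hb
  · exact ⟨q, q', hpq, hq⟩

end Operators

section Security

variable (env : C → Proc A C) (AH : Set A)

def HighStepsByTau (p : Proc A C) : Prop :=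
  ∀ q, Reach (Trans env) p q → ∀ x ∈ AH, ∀ q', Trans env q (some x) q' → TauStar (Trans env) q q'

theorem sbsnni_of_highStepsByTau {p : Proc A C} (hp : HighStepsByTau env AH p) :
    SBSNNI env AH p := by
  let B : Proc A C → Proc A C → Prop := fun s1 s2 => ∃ q, Reach (Trans env) p q ∧
    ((s1 = .restrict q AH ∧ s2 = .hide q AH) ∨ (s1 = .hide q AH ∧ s2 = .restrict q AH))
  have hB : IsWeakBisim (Trans env) B := by
    refine ⟨fun s1 s2 ⟨q, hq, h⟩ => ⟨q, hq, h.symm.imp And.symm And.symm⟩, ?_⟩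
    rintro s1 s2 ⟨q, hq, ⟨rfl, rfl⟩ | ⟨rfl, rfl⟩⟩
    · refine ⟨fun s1' ht => ?_, fun x s1' ht => ?_⟩ <;>
        obtain ⟨q', t, rfl, hn⟩ := trans_restrict ht
      · exact ⟨_, .single (.hideOut t hn), q', hq.tail ⟨_, t⟩, .inl ⟨rfl, rfl⟩⟩
      · exact ⟨_, _, _, .refl, .hideOut t hn, .refl, q', hq.tail ⟨_, t⟩, .inl ⟨rfl, rfl⟩⟩
    · refine ⟨fun s1' ht => ?_, fun x s1' ht => ?_⟩
      · rcases trans_hide ht with ⟨x, q', t, hx, -, rfl⟩ | ⟨q', t, hn, rfl⟩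
        · exact ⟨_, tauStar_restrict (hp q hq x hx q' t), q', hq.tail ⟨_, t⟩, .inr ⟨rfl, rfl⟩⟩
        · exact ⟨_, .single (.res t hn), q', hq.tail ⟨_, t⟩, .inr ⟨rfl, rfl⟩⟩
      · rcases trans_hide ht with ⟨-, -, -, -, hb, -⟩ | ⟨q', t, hn, rfl⟩
        · cases hb
        · exact ⟨_, _, _, .refl, .res t hn, .refl, q', hq.tail ⟨_, t⟩, .inr ⟨rfl, rfl⟩⟩
  exact fun q hq => ⟨B, hB, q, hq, .inl ⟨rfl, rfl⟩⟩

end Security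

section Counterexample

variable {env : C → Proc A C} {L : Set A} {h l1 l2 l3 : A}

abbrev actNil (a : A) : Proc A C := .pre (some a) .nil

abbrev tauChoice (l1 l2 : A) : Proc A C := .choice (.pre none (actNil l1)) (.pre none (actNil l2))

abbrev cex (h l1 l2 l3 : A) : Proc A C :=
  .choice (.pre none (tauChoice l1 l2))
    (.choice (.choice (.pre (some h) (actNil l1)) (.pre (some h) (actNil l2))) (actNil l3))

theorem trans_actNil {a : A} {b : Option A} {s : Proc A C} (t : Trans env (actNil a) b s) :
    b = some a ∧ s = .nil := by
  cases t
  exact ⟨rfl, rfl⟩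

theorem trans_tauChoice {b : Option A} {s : Proc A C} (t : Trans env (tauChoice l1 l2) b s) :
    b = none ∧ (s = actNil l1 ∨ s = actNil l2) := by
  cases t with
  | choiceL t => cases t; exact ⟨rfl, .inl rfl⟩
  | choiceR t => cases t; exact ⟨rfl, .inr rfl⟩

theorem trans_cex {b : Option A} {s : Proc A C} (t : Trans env (cex h l1 l2 l3) b s) :
    (b = none ∧ s = tauChoice l1 l2) ∨ (b = some h ∧ (s = actNil l1 ∨ s = actNil l2)) ∨
      (b = some l3 ∧ s = .nil) := by
  cases t with
  | choiceL t => cases t; exact .inl ⟨rfl, rfl⟩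
  | choiceR t =>
    cases t with
    | choiceL t =>
      cases t with
      | choiceL t => cases t; exact .inr (.inl ⟨rfl, .inl rfl⟩)
      | choiceR t => cases t; exact .inr (.inl ⟨rfl, .inr rfl⟩)
    | choiceR t => cases t; exact .inr (.inr ⟨rfl, rfl⟩)

theorem not_performs_nil {x : A} : ¬ Performs (Trans env) (.nil : Proc A C) x := by
  intro hx
  rcases hx.cases with ⟨_, t⟩ | ⟨_, _, t, -⟩ <;> exact trans_nil t

theorem performs_actNil {a x : A} (hx : Performs (Trans env) (actNil a) x) : x = a := by
  rcases hx.cases with ⟨_, t⟩ | ⟨_, _, t, hx⟩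
  · exact Option.some.inj (trans_actNil t).1
  · obtain ⟨-, rfl⟩ := trans_actNil t
    exact (not_performs_nil hx).elim

theorem performs_tauChoice {x : A} (hx : Performs (Trans env) (tauChoice l1 l2) x) :
    x = l1 ∨ x = l2 := by
  rcases hx.cases with ⟨_, t⟩ | ⟨_, _, t, hx⟩
  · cases (trans_tauChoice t).1
  · rcases (trans_tauChoice t).2 with rfl | rfl
    exacts [.inl (performs_actNil hx), .inr (performs_actNil hx)]

theorem performs_of_trans_cex {a : Option A} {s : Proc A C} {x : A}
    (t : Trans env (cex h l1 l2 l3) a s) (hx : Performs (Trans env) s x) : x = l1 ∨ x = l2 := by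
  rcases trans_cex t with ⟨-, rfl⟩ | ⟨-, rfl | rfl⟩ | ⟨-, rfl⟩
  · exact performs_tauChoice hx
  · exact .inl (performs_actNil hx)
  · exact .inr (performs_actNil hx)
  · exact (not_performs_nil hx).elim

theorem highStepsByTau_cex (hl1 : l1 ∉ L) (hl2 : l2 ∉ L) (hl3 : l3 ∉ L) :
    HighStepsByTau env L (cex h l1 l2 l3) := by
  intro q hq x hx q' t
  rcases hq.cases_head with rfl | ⟨s, ⟨a, ts⟩, hsq⟩
  · have tau : Trans env (cex h l1 l2 l3) none (tauChoice l1 l2) := .choiceL (.pre _ _)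
    rcases trans_cex t with ⟨hb, -⟩ | ⟨-, rfl | rfl⟩ | ⟨hb, -⟩
    · cases hb
    · exact ReflTransGen.head tau (.single (.choiceL (.pre _ _)))
    · exact ReflTransGen.head tau (.single (.choiceR (.pre _ _)))
    · cases hb
      exact absurd hx hl3
  · rcases performs_of_trans_cex ts ⟨q, q', hsq, t⟩ with rfl | rfl
    exacts [absurd hx hl1, absurd hx hl2]

theorem tauStar_restrict_cex {s : Proc A C}
    (hs : TauStar (Trans env) (.restrict (cex h l1 l2 l3) L) s) :
    s = .restrict (cex h l1 l2 l3) L ∨ TauStar (Trans env) (.restrict (tauChoice l1 l2) L) s := by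
  rcases hs.cases_head with rfl | ⟨s', t, hs'⟩
  · exact .inl rfl
  · obtain ⟨p', tp, rfl, -⟩ := trans_restrict t
    rcases trans_cex tp with ⟨-, rfl⟩ | ⟨hb, -⟩ | ⟨hb, -⟩
    · exact .inr hs'
    · cases hb
    · cases hb

theorem not_brsnni_cex (hl2 : l2 ∉ L) (hl3 : l3 ∉ L) (h12 : l1 ≠ l2) (h13 : l1 ≠ l3)
    (h23 : l2 ≠ l3) (hh : h ∈ L) : ¬ BrSNNI env L (cex h l1 l2 l3) := by
  rintro ⟨B, hB, hP⟩
  have hsym := hB.1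
  have l3_restrict : WeakEnabled (Trans env) (.restrict (cex h l1 l2 l3) L) l3 :=
    ⟨_, _, .refl, .res (.choiceR (.choiceR (.pre _ _))) (some_notMem hl3)⟩
  have l3_hide : WeakEnabled (Trans env) (.hide (cex h l1 l2 l3) L) l3 :=
    ⟨_, _, .refl, .hideOut (.choiceR (.choiceR (.pre _ _))) (some_notMem hl3)⟩
  have l2_tauChoice : WeakEnabled (Trans env) (.restrict (tauChoice l1 l2) L) l2 :=
    ⟨_, _, .single (.res (.choiceR (.pre _ _)) none_notMem), .res (.pre _ _) (some_notMem hl2)⟩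
  have only_l1 : ∀ {x}, WeakEnabled (Trans env) (.hide (actNil l1) L) x → x = l1 :=
    fun hx => performs_actNil (performs_hide hx.performs)
  have only_l1_l2 : ∀ {x}, WeakEnabled (Trans env) (.restrict (tauChoice l1 l2) L) x →
      x = l1 ∨ x = l2 :=
    fun hx => performs_tauChoice (performs_restrict hx.performs)
  rcases hB.2 _ _ (hsym hP) none _ (.hideIn (.choiceR (.choiceL (.choiceL (.pre _ _)))) hh)
    with ⟨-, hL1⟩ | ⟨s, s', hs, t, hPs, hL1⟩
  · exact h13 (only_l1 (hB.weakEnabled (hsym hL1) l3_restrict)).symm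
  rcases tauStar_restrict_cex hs with rfl | hs
  · obtain ⟨p', tp, rfl, -⟩ := trans_restrict t
    rcases trans_cex tp with ⟨-, rfl⟩ | ⟨hb, -⟩ | ⟨hb, -⟩
    · exact h12 (only_l1 (hB.weakEnabled (hsym hL1) l2_tauChoice)).symm
    · cases hb
    · cases hb
  · rcases only_l1_l2 ((hB.weakEnabled hPs l3_hide).of_tauStar hs) with h31 | h32
    exacts [h13 h31.symm, h23 h32.symm]

end Counterexample

theorem cex_tau_axiom_2_general {A C : Type} (env : C → Proc A C)
    (AH : Set A)
    (l1 l2 l3 : A) (hl1 : l1 ∉ AH) (hl2 : l2 ∉ AH) (hl3 : l3 ∉ AH)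
    (h12 : l1 ≠ l2) (h13 : l1 ≠ l3) (h23 : l2 ≠ l3)
    (h : A) (hh : h ∈ AH) :
    ∀ P : Proc A C,
      P = Proc.choice
            (Proc.pre none
              (Proc.choice (Proc.pre none (Proc.pre (some l1) Proc.nil))
                           (Proc.pre none (Proc.pre (some l2) Proc.nil))))
            (Proc.choice
              (Proc.choice (Proc.pre (some h) (Proc.pre (some l1) Proc.nil))
                           (Proc.pre (some h) (Proc.pre (some l2) Proc.nil)))
              (Proc.pre (some l3) Proc.nil)) →
      BSNNI env AH P ∧ SBSNNI env AH P ∧ ¬ BrSNNI env AH P ∧ ¬ SBrSNNI env AH P := by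
  rintro P rfl
  have hS : SBSNNI env AH (cex h l1 l2 l3) :=
    sbsnni_of_highStepsByTau env AH (highStepsByTau_cex hl1 hl2 hl3)
  have hBr : ¬ BrSNNI env AH (cex h l1 l2 l3) := not_brsnni_cex hl2 hl3 h12 h13 h23 hh
  exact ⟨hS _ .refl, hS, hBr, fun hSBr => hBr (hSBr _ .refl)⟩

/-- the process τ.(τ.l1.0 + τ.l2.0) + (h.l1.0 + h.l2.0) + l3.0
is BSNNI and SBSNNI but neither BrSNNI nor SBrSNNI. -/
theorem cex_tau_axiom_2 {A C : Type} (env : C → Proc A C)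
    (hguard : ∀ c, Guarded (env c)) (AH : Set A)
    (l1 l2 l3 : A) (hl1 : l1 ∉ AH) (hl2 : l2 ∉ AH) (hl3 : l3 ∉ AH)
    (h12 : l1 ≠ l2) (h13 : l1 ≠ l3) (h23 : l2 ≠ l3)
    (h : A) (hh : h ∈ AH) :
    ∀ P : Proc A C,
      P = Proc.choice
            (Proc.pre none
              (Proc.choice (Proc.pre none (Proc.pre (some l1) Proc.nil))
                           (Proc.pre none (Proc.pre (some l2) Proc.nil))))
            (Proc.choice
              (Proc.choice (Proc.pre (some h) (Proc.pre (some l1) Proc.nil))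
                           (Proc.pre (some h) (Proc.pre (some l2) Proc.nil)))
              (Proc.pre (some l3) Proc.nil)) →
      BSNNI env AH P ∧ SBSNNI env AH P ∧ ¬ BrSNNI env AH P ∧ ¬ SBrSNNI env AH P :=
  cex_tau_axiom_2_general env AH l1 l2 l3 hl1 hl2 hl3 h12 h13 h23 h hh

end SecurityNI
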